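/- Let n ≥ 1 be a natural number, p ∈ [0,1], δ ∈ (0,1), and let X be a random variable with the binomial distribution Bin(n,p). Then Pr(F_{n,p}(X) < δ) ≤ δ; that is, the probability that the binomial CDF evaluated at the observed count falls strictly below δ is at most δ. -/

import Mathlib

open scoped Classical BigOperators

/-- The probability mass function of the binomial distribution `Bin(n, p)` at `j`. -/
noncomputable def binomPMF (n : ℕ) (p : ℝ) (j : ℕ) : ℝ :=
  (n.choose j : ℝ) * p ^ j * (1 - p) ^ (n - j)

/-- The cumulative distribution function of `Bin(n, p)` at `k`:
`F_{n,p}(k) = Σ_{j=0}^{min(k,n)} C(n,j) p^j (1-p)^{n-j}`. -/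
noncomputable def binomCDF (n : ℕ) (p : ℝ) (k : ℕ) : ℝ :=
  ∑ j ∈ Finset.range (min k n + 1), binomPMF n p j

/-- One-sided Clopper–Pearson upper confidence bound at count `k` and level `δ`:
`sup {R ∈ [0,1] : F_{n,R}(k) ≥ δ}`. -/
noncomputable def cpUpper (n : ℕ) (δ : ℝ) (k : ℕ) : ℝ :=
  sSup {R : ℝ | R ∈ Set.Icc (0 : ℝ) 1 ∧ δ ≤ binomCDF n R k}

/-- One-sided Clopper–Pearson lower confidence bound at count `k` and level `δ`:
`inf {R ∈ [0,1] : 1 - F_{n,R}(k-1) ≥ δ}` for `k ≥ 1`, and `0` for `k = 0`. -/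
noncomputable def cpLower (n : ℕ) (δ : ℝ) : ℕ → ℝ
  | 0 => 0
  | k + 1 => sInf {R : ℝ | R ∈ Set.Icc (0 : ℝ) 1 ∧ δ ≤ 1 - binomCDF n R k}

/- Keeping only the terms of a nonnegative sequence whose partial sum is still below `δ` gains at
most `δ`: the kept terms among the first `N` sum to at most `min δ S_N`, because whenever term `N`
is kept, everything kept so far is bounded by `S_{N+1} < δ`. The binomial weights, whose partial
sums are the CDF, give the theorem. -/

open Finset

theorem sum_ite_partialSum_lt_le_min {α : Type*} [AddCommMonoid α] [LinearOrder α]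
    [IsOrderedAddMonoid α] {f : ℕ → α} (hf : ∀ j, 0 ≤ f j) {δ : α} (hδ : 0 ≤ δ) (N : ℕ) :
    ∑ j ∈ range N, (if ∑ i ∈ range (j + 1), f i < δ then f j else 0) ≤
      min δ (∑ j ∈ range N, f j) := by
  induction N with
  | zero => simpa using hδ
  | succ N ih =>
    obtain ⟨h_le_δ, h_le_sum⟩ := le_min_iff.1 ih
    rw [sum_range_succ _ N, sum_range_succ f N]
    split_ifs with hlt
    · have h := add_le_add_left h_le_sum (f N)
      exact le_min (h.trans hlt.le) h
    · rw [add_zero]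
      exact le_min h_le_δ (h_le_sum.trans (le_add_of_nonneg_right (hf N)))

theorem binomPMF_nonneg (n : ℕ) {p : ℝ} (hp : p ∈ Set.Icc (0 : ℝ) 1) (j : ℕ) :
    0 ≤ binomPMF n p j := by
  have : 0 ≤ 1 - p := sub_nonneg.2 hp.2
  have := hp.1
  unfold binomPMF
  positivity

theorem binomCDF_eq_sum_range {n k : ℕ} (hk : k ≤ n) (p : ℝ) :
    binomCDF n p k = ∑ j ∈ range (k + 1), binomPMF n p j := by
  rw [binomCDF, min_eq_left hk]

theorem prob_binomCDF_lt_le_general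
    (n : ℕ) (p : ℝ) (hp : p ∈ Set.Icc (0 : ℝ) 1)
    (δ : ℝ) (hδ : δ ∈ Set.Ioo (0 : ℝ) 1) :
    ∑ j ∈ Finset.range (n + 1),
      (if binomCDF n p j < δ then binomPMF n p j else 0) ≤ δ := by
  calc ∑ j ∈ range (n + 1), (if binomCDF n p j < δ then binomPMF n p j else 0)
      = ∑ j ∈ range (n + 1),
          (if ∑ i ∈ range (j + 1), binomPMF n p i < δ then binomPMF n p j else 0) := by
        refine sum_congr rfl fun j hj => ?_
        rw [binomCDF_eq_sum_range (Nat.lt_succ_iff.1 (mem_range.1 hj))]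
    _ ≤ min δ (∑ j ∈ range (n + 1), binomPMF n p j) :=
        sum_ite_partialSum_lt_le_min (binomPMF_nonneg n hp) hδ.1.le _
    _ ≤ δ := min_le_left _ _

/-- The probability that the binomial CDF evaluated at the observed count falls strictly
below δ is at most δ: Pr(F_{n,p}(X) < δ) ≤ δ. -/
theorem prob_binomCDF_lt_le
    (n : ℕ) (hn : 1 ≤ n) (p : ℝ) (hp : p ∈ Set.Icc (0 : ℝ) 1)
    (δ : ℝ) (hδ : δ ∈ Set.Ioo (0 : ℝ) 1) :
    ∑ j ∈ Finset.range (n + 1),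
      (if binomCDF n p j < δ then binomPMF n p j else 0) ≤ δ :=
  prob_binomCDF_lt_le_general n p hp δ hδ
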